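/- arXiv:2508.02125 — 2 statements merged into one kernel-verified Lean document; each statement's English description precedes it below -/
import Mathlib

section
/- If n ≥ k > a ≥ 1, then B(J(n,k,a)) ≤ max{a, k-a} + 2. Moreover, for n ≥ k+1, with m = max{a,k-a}+2, the family {[k+1]\{i} : 1 ≤ i ≤ m} is a zero blocking set of J(n,k,a). -/
/-- A vertex is (eventually) black in the zero forcing process started
from the initial black set `B`: either it is in `B`, or some black vertex
has it as its unique white neighbor. -/
inductive SimpleGraph.Forced {V : Type*} (G : SimpleGraph V) (B : Set V) : V → Prop
  | init {v : V} : v ∈ B → SimpleGraph.Forced G B v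
  | force {u w : V} : SimpleGraph.Forced G B u → G.Adj u w →
      (∀ x, G.Adj u x → x ≠ w → SimpleGraph.Forced G B x) → SimpleGraph.Forced G B w

/-- `B` is a zero forcing set: the process colors every vertex black. -/
def SimpleGraph.IsZeroForcing {V : Type*} (G : SimpleGraph V) (B : Set V) : Prop :=
  ∀ v, G.Forced B v

/-- `W` is a zero blocking set: its complement is a failed zero forcing set. -/
def SimpleGraph.IsZeroBlocking {V : Type*} (G : SimpleGraph V) (W : Set V) : Prop :=
  ¬ G.IsZeroForcing Wᶜ

/-- The zero blocking number `B(G)`: minimum size of a zero blocking set. -/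
noncomputable def SimpleGraph.zeroBlockingNumber {V : Type*} (G : SimpleGraph V) : ℕ :=
  sInf {m | ∃ W : Set V, G.IsZeroBlocking W ∧ W.ncard = m}

/-- The failed zero forcing number `F(G)`: maximum size of a failed zero forcing set. -/
noncomputable def SimpleGraph.failedZeroForcingNumber {V : Type*} (G : SimpleGraph V) : ℕ :=
  sSup {m | ∃ B : Set V, ¬ G.IsZeroForcing B ∧ B.ncard = m}

/-- The generalized Kneser graph `K(n,k,a)`: vertices are the `k`-subsets of `[n]`,
`A` adjacent to `B` iff `A ≠ B` and `|A ∩ B| ≤ a`. -/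
def genKneser (n k a : ℕ) : SimpleGraph {s : Finset (Fin n) // s.card = k} where
  Adj A B := A ≠ B ∧ ((A : Finset (Fin n)) ∩ (B : Finset (Fin n))).card ≤ a
  symm := ⟨fun A B ⟨h1, h2⟩ => ⟨h1.symm, by rwa [Finset.inter_comm]⟩⟩
  loopless := ⟨fun A h => h.1 rfl⟩

/-- The generalized Johnson graph `J(n,k,a)`: vertices are the `k`-subsets of `[n]`,
`A` adjacent to `B` iff `A ≠ B` and `|A ∩ B| = a`. -/
def genJohnson (n k a : ℕ) : SimpleGraph {s : Finset (Fin n) // s.card = k} where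
  Adj A B := A ≠ B ∧ ((A : Finset (Fin n)) ∩ (B : Finset (Fin n))).card = a
  symm := ⟨fun A B ⟨h1, h2⟩ => ⟨h1.symm, by rwa [Finset.inter_comm]⟩⟩
  loopless := ⟨fun A h => h.1 rfl⟩

private lemma no_forced_empty {V : Type*} (G : SimpleGraph V) (v : V) :
    ¬ G.Forced ∅ v := by
  intro h
  induction h with
  | init h => exact h
  | force _ _ _ ihu _ => exact ihu

private lemma card_filter_val_lt (n c : ℕ) (h : c ≤ n) :
    (Finset.univ.filter (fun x : Fin n => (x : ℕ) < c)).card = c := by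
  have heq : (Finset.univ.filter (fun x : Fin n => (x : ℕ) < c))
      = Finset.map (Fin.castLEEmb h) Finset.univ := by
    ext x
    simp only [Finset.mem_filter, Finset.mem_map, Finset.mem_univ, true_and]
    constructor
    · intro hx; exact ⟨⟨x, hx⟩, by simp [Fin.castLEEmb, Fin.castLE, Fin.ext_iff]⟩
    · rintro ⟨y, rfl⟩
      simpa [Fin.castLEEmb, Fin.castLE] using y.isLt
  rw [heq, Finset.card_map, Finset.card_univ, Fintype.card_fin]

private lemma key_lemma (n k a : ℕ) (ha : 1 ≤ a) (hak : a < k) (hkn : k + 1 ≤ n)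
    (U : Finset (Fin n)) (hU : U.card = k)
    (hUW : ¬ ∃ i : Fin n, (i : ℕ) < max a (k - a) + 2 ∧
      U = (Finset.univ.filter (fun x : Fin n => (x : ℕ) < k + 1)) \ {i})
    (i : Fin n) (hiM : (i : ℕ) < max a (k - a) + 2)
    (hia : (U ∩ ((Finset.univ.filter (fun x : Fin n => (x : ℕ) < k + 1)) \ {i})).card = a) :
    ∃ j : Fin n, (j : ℕ) < max a (k - a) + 2 ∧ j ≠ i ∧
      (U ∩ ((Finset.univ.filter (fun x : Fin n => (x : ℕ) < k + 1)) \ {j})).card = a := by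
  set M := max a (k - a) + 2 with hMdef
  set S := Finset.univ.filter (fun x : Fin n => (x : ℕ) < k + 1) with hSdef
  have hMk : M ≤ k + 1 := by
    have h1 : a ≤ k - 1 := by omega
    have h2 : k - a ≤ k - 1 := by omega
    have := max_le h1 h2
    omega
  have hMn : M ≤ n := hMk.trans hkn
  have hSc : S.card = k + 1 := card_filter_val_lt n (k + 1) hkn
  have memS : ∀ x : Fin n, x ∈ S ↔ (x : ℕ) < k + 1 := by
    intro x; simp [hSdef]
  have hiS : i ∈ S := (memS i).2 (lt_of_lt_of_le hiM hMk)
  have hassoc : ∀ j : Fin n, U ∩ (S \ {j}) = (U ∩ S) \ {j} := by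
    intro j; rw [Finset.inter_sdiff_assoc]
  rw [hassoc] at hia
  set t := (U ∩ S).card with htdef
  have hSU : (S \ U).card = k + 1 - t := by
    have := Finset.card_sdiff_add_card_inter S U
    rw [Finset.inter_comm] at this
    omega
  by_cases hiU : i ∈ U
  · -- t = a + 1, pick j < M, j ∈ U, j ≠ i
    have hit : i ∈ U ∩ S := Finset.mem_inter.2 ⟨hiU, hiS⟩
    have hcard : ((U ∩ S) \ {i}).card = t - 1 := by
      rw [Finset.card_sdiff_of_subset (Finset.singleton_subset_iff.2 hit), Finset.card_singleton]
    have htpos : 1 ≤ t := Finset.card_pos.2 ⟨i, hit⟩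
    have ht : t = a + 1 := by omega
    set F := Finset.univ.filter (fun j : Fin n => (j : ℕ) < M ∧ j ∈ U) with hFdef
    have hF2 : 2 ≤ F.card := by
      set L := Finset.univ.filter (fun j : Fin n => (j : ℕ) < M) with hLdef
      have hLc : L.card = M := card_filter_val_lt n M hMn
      have hsplit := Finset.card_filter_add_card_filter_not
        (s := L) (p := fun j : Fin n => j ∈ U)
      have hFeq : L.filter (fun j : Fin n => j ∈ U) = F := by
        rw [hLdef, Finset.filter_filter]
      have hsub : L.filter (fun j : Fin n => ¬ j ∈ U) ⊆ S \ U := by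
        intro x hx
        simp only [Finset.mem_filter, hLdef, Finset.mem_univ, true_and] at hx
        exact Finset.mem_sdiff.2 ⟨(memS x).2 (lt_of_lt_of_le hx.1 hMk), hx.2⟩
      have hle := Finset.card_le_card hsub
      have hmax : k - a ≤ max a (k - a) := le_max_right _ _
      rw [hFeq] at hsplit
      omega
    obtain ⟨j, hjF, hji⟩ := Finset.exists_mem_ne (s := F) (by omega) i
    simp only [hFdef, Finset.mem_filter, Finset.mem_univ, true_and] at hjF
    refine ⟨j, hjF.1, hji, ?_⟩
    rw [hassoc]
    have hjt : j ∈ U ∩ S :=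
      Finset.mem_inter.2 ⟨hjF.2, (memS j).2 (lt_of_lt_of_le hjF.1 hMk)⟩
    rw [Finset.card_sdiff_of_subset (Finset.singleton_subset_iff.2 hjt), Finset.card_singleton]
    omega
  · -- t = a, pick j < M, j ∉ U, j ≠ i
    have hnot : i ∉ U ∩ S := fun h => hiU (Finset.mem_inter.1 h).1
    have ht : t = a := by
      rwa [← Finset.erase_eq, Finset.erase_eq_of_notMem hnot] at hia
    set F := Finset.univ.filter (fun j : Fin n => (j : ℕ) < M ∧ ¬ j ∈ U) with hFdef
    have hF2 : 2 ≤ F.card := by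
      set L := Finset.univ.filter (fun j : Fin n => (j : ℕ) < M) with hLdef
      have hLc : L.card = M := card_filter_val_lt n M hMn
      have hsplit := Finset.card_filter_add_card_filter_not
        (s := L) (p := fun j : Fin n => ¬ j ∈ U)
      have hFeq : L.filter (fun j : Fin n => ¬ j ∈ U) = F := by
        rw [hLdef, Finset.filter_filter]
      have hsub : L.filter (fun j : Fin n => ¬ ¬ j ∈ U) ⊆ U ∩ S := by
        intro x hx
        simp only [Finset.mem_filter, hLdef, Finset.mem_univ, true_and, not_not] at hx
        exact Finset.mem_inter.2 ⟨hx.2, (memS x).2 (lt_of_lt_of_le hx.1 hMk)⟩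
      have hle := Finset.card_le_card hsub
      have hmax : a ≤ max a (k - a) := le_max_left _ _
      rw [hFeq] at hsplit
      omega
    obtain ⟨j, hjF, hji⟩ := Finset.exists_mem_ne (s := F) (by omega) i
    simp only [hFdef, Finset.mem_filter, Finset.mem_univ, true_and] at hjF
    refine ⟨j, hjF.1, hji, ?_⟩
    rw [hassoc]
    have hjnot : j ∉ U ∩ S := fun h => hjF.2 (Finset.mem_inter.1 h).1
    rw [← Finset.erase_eq, Finset.erase_eq_of_notMem hjnot]
    omega

private lemma blocking_main (n k a : ℕ) (ha : 1 ≤ a) (hak : a < k) (hkn : k + 1 ≤ n) :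
    (genJohnson n k a).IsZeroBlocking
      {A : {s : Finset (Fin n) // s.card = k} |
        ∃ i : Fin n, (i : ℕ) < max a (k - a) + 2 ∧
          (A : Finset (Fin n)) =
            (Finset.univ.filter (fun x : Fin n => (x : ℕ) < k + 1)) \ {i}} := by
  set M := max a (k - a) + 2 with hMdef
  set S := Finset.univ.filter (fun x : Fin n => (x : ℕ) < k + 1) with hSdef
  set W : Set {s : Finset (Fin n) // s.card = k} :=
    {A | ∃ i : Fin n, (i : ℕ) < M ∧ (A : Finset (Fin n)) = S \ {i}} with hWdef
  have hMk : M ≤ k + 1 := by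
    have h1 : a ≤ k - 1 := by omega
    have h2 : k - a ≤ k - 1 := by omega
    have := max_le h1 h2
    omega
  have hSc : S.card = k + 1 := card_filter_val_lt n (k + 1) hkn
  have memS : ∀ x : Fin n, x ∈ S ↔ (x : ℕ) < k + 1 := by
    intro x; simp [hSdef]
  have cardw : ∀ j : Fin n, (j : ℕ) < M → (S \ {j}).card = k := by
    intro j hj
    rw [Finset.card_sdiff_of_subset (Finset.singleton_subset_iff.2
      ((memS j).2 (lt_of_lt_of_le hj hMk))), Finset.card_singleton, hSc]
    omega
  intro hZF
  have hforced : ∀ v, (genJohnson n k a).Forced Wᶜ v → v ∉ W := by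
    intro v h
    induction h with
    | init h => exact h
    | @force u w hu hadj hall ihu ihall =>
      intro hwW
      obtain ⟨i, hiM, hEq⟩ := hwW
      have huW : ¬ ∃ i : Fin n, (i : ℕ) < M ∧ (u : Finset (Fin n)) = S \ {i} := ihu
      obtain ⟨j, hjM, hji, hja⟩ := key_lemma n k a ha hak hkn (u : Finset (Fin n))
        u.prop huW i hiM (by rw [← hEq]; exact (show u ≠ w ∧ _ from hadj).2)
      have hjS : j ∈ S := (memS j).2 (lt_of_lt_of_le hjM hMk)
      set w' : {s : Finset (Fin n) // s.card = k} := ⟨S \ {j}, cardw j hjM⟩ with hw'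
      have hw'w : w' ≠ w := by
        intro hcon
        have : (w' : Finset (Fin n)) = (w : Finset (Fin n)) := by rw [hcon]
        rw [hEq] at this
        have hji' : i ∈ S \ {j} := Finset.mem_sdiff.2
          ⟨(memS i).2 (lt_of_lt_of_le hiM hMk), by simpa [eq_comm] using hji.symm⟩
        rw [hw'] at this
        simp only [] at this
        rw [this] at hji'
        simp at hji'
      have hadj' : (genJohnson n k a).Adj u w' := by
        refine (⟨?_, hja⟩ : u ≠ w' ∧ _)
        intro hcon
        exact huW ⟨j, hjM, by rw [hcon]⟩
      exact ihall w' hadj' hw'w ⟨j, hjM, rfl⟩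
  have hn0 : 0 < n := by omega
  set i0 : Fin n := ⟨0, hn0⟩ with hi0
  have hi0M : (i0 : ℕ) < M := by simp [hi0, hMdef]
  set v0 : {s : Finset (Fin n) // s.card = k} := ⟨S \ {i0}, cardw i0 hi0M⟩ with hv0
  exact hforced v0 (hZF v0) ⟨i0, hi0M, rfl⟩


theorem stmt17 (n k a : ℕ) (ha : 1 ≤ a) (hak : a < k) (hkn : k ≤ n) :
    (genJohnson n k a).zeroBlockingNumber ≤ max a (k - a) + 2 ∧
    (k + 1 ≤ n →
      (genJohnson n k a).IsZeroBlocking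
        {A : {s : Finset (Fin n) // s.card = k} |
          ∃ i : Fin n, (i : ℕ) < max a (k - a) + 2 ∧
            (A : Finset (Fin n)) =
              (Finset.univ.filter (fun x : Fin n => (x : ℕ) < k + 1)) \ {i}}) := by
  constructor
  · by_cases hn : k + 1 ≤ n
    · set M := max a (k - a) + 2 with hMdef
      set S := Finset.univ.filter (fun x : Fin n => (x : ℕ) < k + 1) with hSdef
      set W : Set {s : Finset (Fin n) // s.card = k} :=
        {A | ∃ i : Fin n, (i : ℕ) < M ∧ (A : Finset (Fin n)) = S \ {i}} with hWdef
      have hMk : M ≤ k + 1 := by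
        have h1 : a ≤ k - 1 := by omega
        have h2 : k - a ≤ k - 1 := by omega
        have := max_le h1 h2
        omega
      have hblock := blocking_main n k a ha hak hn
      have hmem : W.ncard ∈ {m | ∃ W' : Set {s : Finset (Fin n) // s.card = k},
          (genJohnson n k a).IsZeroBlocking W' ∧ W'.ncard = m} := ⟨W, hblock, rfl⟩
      refine le_trans (Nat.sInf_le hmem) ?_
      have h1 : W.ncard = (Subtype.val '' W).ncard :=
        (Set.ncard_image_of_injective W Subtype.val_injective).symm
      have hsub : Subtype.val '' W ⊆
          (fun i : Fin n => S \ {i}) '' {i : Fin n | (i : ℕ) < M} := by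
        rintro x ⟨A, ⟨i, hiM, hEq⟩, rfl⟩
        exact ⟨i, hiM, hEq.symm⟩
      have h2 : (Subtype.val '' W).ncard ≤
          ((fun i : Fin n => S \ {i}) '' {i : Fin n | (i : ℕ) < M}).ncard :=
        Set.ncard_le_ncard hsub (Set.toFinite _)
      have h3 : ((fun i : Fin n => S \ {i}) '' {i : Fin n | (i : ℕ) < M}).ncard ≤
          ({i : Fin n | (i : ℕ) < M}).ncard := Set.ncard_image_le (Set.toFinite _)
      have h4 : ({i : Fin n | (i : ℕ) < M}).ncard = M := by
        have : {i : Fin n | (i : ℕ) < M} =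
            ↑(Finset.univ.filter (fun x : Fin n => (x : ℕ) < M)) := by
          ext x; simp
        rw [this, Set.ncard_coe_finset, card_filter_val_lt n M (by omega)]
      omega
    · have hnk : n = k := by omega
      have hvd : (Finset.univ : Finset (Fin n)).card = k := by
        rw [Finset.card_univ, Fintype.card_fin, hnk]
      set v : {s : Finset (Fin n) // s.card = k} := ⟨Finset.univ, hvd⟩ with hv
      have hsub : Subsingleton {s : Finset (Fin n) // s.card = k} := by
        constructor
        rintro ⟨A, hA⟩ ⟨B, hB⟩
        have hA' : A = Finset.univ := Finset.eq_univ_of_card A (by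
          rw [hA, Fintype.card_fin, hnk])
        have hB' : B = Finset.univ := Finset.eq_univ_of_card B (by
          rw [hB, Fintype.card_fin, hnk])
        exact Subtype.ext (hA'.trans hB'.symm)
      have hblock : (genJohnson n k a).IsZeroBlocking Set.univ := by
        intro hZF
        have h := hZF v
        rw [Set.compl_univ] at h
        exact no_forced_empty _ v h
      refine le_trans (Nat.sInf_le ⟨Set.univ, hblock, rfl⟩) ?_
      rw [Set.ncard_univ]
      have : Nat.card {s : Finset (Fin n) // s.card = k} = 1 :=
        Nat.card_eq_one_iff_unique.2 ⟨hsub, ⟨v⟩⟩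
      omega
  · intro hn
    exact blocking_main n k a ha hak hn
end

section
/- Let S_1, ..., S_p (p ≥ 2) be pairwise disjoint finite sets and a_1, ..., a_p positive integers. If |S_1| ≥ 3, |S_2| ≥ 2, and 2 ≤ t ≤ (Σ_{i=1}^p |S_i|) - p - 1, then there exists a subset S of S_1 ∪ ... ∪ S_p with |S| = t such that |S ∩ S_i| ≠ a_i for every 1 ≤ i ≤ p. -/
lemma exists_good_b (q : ℕ) : ∀ (n a : ℕ → ℕ), (∀ i, 1 ≤ a i) → 3 ≤ n 0 → 2 ≤ n 1 →
    ∀ t : ℕ, (t = 0 ∨ (2 ≤ t ∧ t ≤ n 0 + n 1 - 2 + ∑ i ∈ Finset.range q, (n (i+2) - 1))) →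
    ∃ b : ℕ → ℕ, (∀ i, b i ≤ n i ∧ b i ≠ a i) ∧ ∑ i ∈ Finset.range (q+2), b i = t := by
  induction q with
  | zero =>
    intro n a ha hn0 hn1 t ht
    simp only [Finset.range_zero, Finset.sum_empty, Nat.add_zero] at ht
    rcases ht with rfl | ⟨ht1, ht2⟩
    · exact ⟨fun _ => 0, fun i => ⟨Nat.zero_le _, by have := ha i; simp; omega⟩, by simp⟩
    · have hx : ∃ x, x ≤ n 0 ∧ x ≤ t ∧ t - x ≤ n 1 ∧ x ≠ a 0 ∧ t - x ≠ a 1 := by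
        by_cases h1 : t - n 1 ≠ a 0 ∧ t - (t - n 1) ≠ a 1
        · exact ⟨t - n 1, by omega, by omega, by omega, h1.1, h1.2⟩
        · by_cases h2 : t - n 1 + 1 ≠ a 0 ∧ t - (t - n 1 + 1) ≠ a 1
          · exact ⟨t - n 1 + 1, by omega, by omega, by omega, h2.1, h2.2⟩
          · exact ⟨t - n 1 + 2, by omega, by omega, by omega, by omega, by omega⟩
      obtain ⟨x, hx0, hxt, hx1, hxa0, hxa1⟩ := hx
      refine ⟨fun i => if i = 0 then x else if i = 1 then t - x else 0, ?_, ?_⟩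
      · intro i
        by_cases h0 : i = 0
        · simp [h0]; exact ⟨hx0, hxa0⟩
        · by_cases h1 : i = 1
          · simp [h0, h1]; exact ⟨by omega, hxa1⟩
          · simp [h0, h1]; have := ha i; omega
      · simp [Finset.sum_range_succ]; omega
  | succ q ih =>
    intro n a ha hn0 hn1 t ht
    set M := n 0 + n 1 - 2 + ∑ i ∈ Finset.range q, (n (i+2) - 1) with hM
    have hM3 : 3 ≤ M := by
      have : (0:ℕ) ≤ ∑ i ∈ Finset.range q, (n (i+2) - 1) := Nat.zero_le _
      omega
    have hsum : n 0 + n 1 - 2 + ∑ i ∈ Finset.range (q+1), (n (i+2) - 1)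
        = M + (n (q+2) - 1) := by
      rw [Finset.sum_range_succ]; omega
    rw [hsum] at ht
    by_cases hc : t ≤ M
    · obtain ⟨b, hb1, hb2⟩ := ih n a ha hn0 hn1 t (by omega)
      refine ⟨fun i => if i < q+2 then b i else 0, ?_, ?_⟩
      · intro i
        by_cases h : i < q+2
        · simp [h]; exact (hb1 i)
        · simp [h]; have := ha i; omega
      · rw [Finset.sum_range_succ]
        have e0 : (if q+2 < q+2 then b (q+2) else 0) = 0 := by simp
        rw [e0, Nat.add_zero]
        calc ∑ i ∈ Finset.range (q+2), (if i < q+2 then b i else 0)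
            = ∑ i ∈ Finset.range (q+2), b i :=
              Finset.sum_congr rfl (fun i hi => by simp [Finset.mem_range.mp hi])
          _ = t := hb2
    · have ht' : 2 ≤ t ∧ t ≤ M + (n (q+2) - 1) := by omega
      have hn : 2 ≤ n (q+2) := by omega
      set c := if t - M = a (q+2) then t - M + 1 else t - M with hcdef
      have hcprop : c ≤ n (q+2) ∧ c ≠ a (q+2) ∧ 2 ≤ t - c ∧ t - c ≤ M ∧ c ≤ t := by
        rw [hcdef]; split_ifs with h <;> omega
      obtain ⟨b, hb1, hb2⟩ := ih n a ha hn0 hn1 (t - c) (by omega)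
      refine ⟨fun i => if i < q+2 then b i else if i = q+2 then c else 0, ?_, ?_⟩
      · intro i
        by_cases h : i < q+2
        · simp [h]; exact hb1 i
        · by_cases h2 : i = q+2
          · simp [h, h2]; exact ⟨hcprop.1, hcprop.2.1⟩
          · simp [h, h2]; have := ha i; omega
      · rw [Finset.sum_range_succ]
        have e1 : ∑ i ∈ Finset.range (q+2), (if i < q+2 then b i else if i = q+2 then c else 0)
            = ∑ i ∈ Finset.range (q+2), b i :=
          Finset.sum_congr rfl (fun i hi => by simp [Finset.mem_range.mp hi])
        have e2 : (if q+2 < q+2 then b (q+2) else if q+2 = q+2 then c else 0) = c := by simp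
        rw [e1, hb2, e2]
        omega

theorem stmt19 {α : Type*} [DecidableEq α] (p t : ℕ) (hp : 2 ≤ p)
    (S : Fin p → Finset α) (a : Fin p → ℕ)
    (hdisj : ∀ i j, i ≠ j → Disjoint (S i) (S j))
    (hapos : ∀ i, 0 < a i)
    (hS1 : 3 ≤ (S ⟨0, by omega⟩).card) (hS2 : 2 ≤ (S ⟨1, by omega⟩).card)
    (ht1 : 2 ≤ t) (ht2 : t + p + 1 ≤ ∑ i, (S i).card) :
    ∃ s : Finset α, s ⊆ Finset.univ.biUnion S ∧ s.card = t ∧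
      ∀ i, (s ∩ S i).card ≠ a i := by
  obtain ⟨q, rfl⟩ : ∃ q, p = q + 2 := ⟨p - 2, by omega⟩
  set n' : ℕ → ℕ := fun i => if h : i < q + 2 then (S ⟨i, h⟩).card else 0 with hn'
  set a' : ℕ → ℕ := fun i => if h : i < q + 2 then a ⟨i, h⟩ else 1 with ha'
  have ha'pos : ∀ i, 1 ≤ a' i := by
    intro i; rw [ha']; dsimp only; split
    · exact hapos _
    · exact le_refl 1
  have hn0 : 3 ≤ n' 0 := by
    rw [hn']; dsimp only; rw [dif_pos (by omega : (0:ℕ) < q + 2)]; exact hS1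
  have hn1 : 2 ≤ n' 1 := by
    rw [hn']; dsimp only; rw [dif_pos (by omega : (1:ℕ) < q + 2)]; exact hS2
  have hsum : ∑ i ∈ Finset.range (q+2), n' i = ∑ i, (S i).card := by
    rw [← Fin.sum_univ_eq_sum_range]
    refine Finset.sum_congr rfl (fun i _ => ?_)
    rw [hn']; dsimp only; rw [dif_pos i.isLt]
  have hsplit : ∑ i ∈ Finset.range (q+2), n' i
      = n' 0 + n' 1 + ∑ i ∈ Finset.range q, n' (i+2) := by
    rw [Finset.sum_range_succ', Finset.sum_range_succ']; ring
  have hshift : ∑ i ∈ Finset.range q, n' (i+2)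
      ≤ ∑ i ∈ Finset.range q, (n' (i+2) - 1) + q := by
    calc ∑ i ∈ Finset.range q, n' (i+2)
        ≤ ∑ i ∈ Finset.range q, ((n' (i+2) - 1) + 1) :=
          Finset.sum_le_sum (fun i _ => by omega)
      _ = ∑ i ∈ Finset.range q, (n' (i+2) - 1) + q := by
          rw [Finset.sum_add_distrib, Finset.sum_const, smul_eq_mul, mul_one,
            Finset.card_range]
  obtain ⟨b, hb1, hb2⟩ := exists_good_b q n' a' ha'pos hn0 hn1 t
    (Or.inr ⟨ht1, by omega⟩)
  set b' : Fin (q+2) → ℕ := fun i => b i.val with hb'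
  have hble : ∀ i : Fin (q+2), b' i ≤ (S i).card ∧ b' i ≠ a i := by
    intro i
    have := hb1 i.val
    rw [hn', ha'] at this
    simp only [dif_pos i.isLt, Fin.eta] at this
    exact this
  choose c hc1 hc2 using fun i : Fin (q+2) =>
    Finset.exists_subset_card_eq (hble i).1
  refine ⟨Finset.univ.biUnion c, ?_, ?_, ?_⟩
  · intro x hx
    obtain ⟨i, _, hxi⟩ := Finset.mem_biUnion.mp hx
    exact Finset.mem_biUnion.mpr ⟨i, Finset.mem_univ i, hc1 i hxi⟩
  · rw [Finset.card_biUnion (fun i _ j _ hij => (hdisj i j hij).mono (hc1 i) (hc1 j))]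
    calc ∑ i, (c i).card = ∑ i : Fin (q+2), b' i := by
          exact Finset.sum_congr rfl (fun i _ => hc2 i)
      _ = ∑ i ∈ Finset.range (q+2), b i := Fin.sum_univ_eq_sum_range b (q+2)
      _ = t := hb2
  · intro i
    have hkey : Finset.univ.biUnion c ∩ S i = c i := by
      ext x
      simp only [Finset.mem_inter, Finset.mem_biUnion, Finset.mem_univ, true_and]
      constructor
      · rintro ⟨⟨j, hxj⟩, hxi⟩
        rcases eq_or_ne j i with rfl | hji
        · exact hxj
        · exact absurd (Finset.mem_inter.mpr ⟨hc1 j hxj, hxi⟩)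
            (by rw [Finset.disjoint_iff_inter_eq_empty.mp (hdisj j i hji)]; simp)
      · intro hx
        exact ⟨⟨i, hx⟩, hc1 i hx⟩
    rw [hkey, hc2 i]
    exact (hble i).2
end
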